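/- Consider the jump map θ on ordered configurations: given ranks i < j, all coordinates keep their values except the rank-i coordinate is replaced by the rank-j value, and the configuration is re-sorted. If two ordered configurations ζ, ζ̃ ∈ ℝ^N satisfy ζ[k+1] − ζ[k] ≤ ζ̃[k+1] − ζ̃[k] for all k, then after applying the same rank-based jump (i,j) to both and re-sorting, the spacing domination ζ'[k+1] − ζ'[k] ≤ ζ̃'[k+1] − ζ̃'[k] for all k is preserved. -/

import Mathlib

/-!
Spacing domination of `ζ` by `ζ'` says exactly that `ζ' - ζ` is monotone. For monotone `ζ`, the
jump `(i, j)` followed by re-sorting is precomposition with one and the same monotone map of ranks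
(ranks in `[i, j)` move up by one, rank `j` is taken twice), and precomposing a monotone function
with a monotone map keeps it monotone.
-/

/-- Sort a tuple of reals in increasing order. -/
noncomputable def sortv {n : ℕ} (f : Fin n → ℝ) : Fin n → ℝ := f ∘ Tuple.sort f

open Function

theorem Fin.spacing_le_iff_monotone_sub {α : Type*} [AddCommGroup α] [PartialOrder α]
    [IsOrderedAddMonoid α] {M : ℕ} (f g : Fin (M + 1) → α) :
    (∀ k : Fin M, f k.succ - f k.castSucc ≤ g k.succ - g k.castSucc) ↔ Monotone (g - f) := by
  simp only [Fin.monotone_iff_le_succ, Pi.sub_apply, sub_le_sub_iff, add_comm]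

theorem update_comp_perm_eq_comp_update {α β : Type*} [DecidableEq α] (f : α → β)
    (σ : Equiv.Perm α) {i j : α} (hσ : σ j = i) : update f i (f j) ∘ σ = f ∘ update σ j j := by
  rw [update_comp_equiv, comp_update, ← hσ, Equiv.symm_apply_apply]

namespace Fin

variable {n : ℕ}

def jumpIndex (i j : Fin n) : Fin n → Fin n := update (cycleIcc i j) j j

theorem val_jumpIndex {i j : Fin n} (hij : i ≤ j) (k : Fin n) :
    (jumpIndex i j k : ℕ) = if i ≤ k ∧ k < j then (k : ℕ) + 1 else k := by
  have : NeZero n := NeZero.of_pos i.pos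
  unfold jumpIndex
  rcases lt_trichotomy k j with hkj | rfl | hjk
  · rw [update_of_ne hkj.ne]
    by_cases hik : i ≤ k
    · rw [if_pos ⟨hik, hkj⟩, cycleIcc_of_ge_of_lt hik hkj, val_add_one_of_lt' (by omega)]
    · rw [if_neg (fun h => hik h.1), cycleIcc_of_lt (not_le.1 hik)]
  · simp
  · rw [update_of_ne hjk.ne', if_neg (fun h => (h.2.trans hjk).false), cycleIcc_of_gt hjk]

theorem monotone_jumpIndex {i j : Fin n} (hij : i ≤ j) : Monotone (jumpIndex i j) := by
  intro a b hab
  rw [le_def, val_jumpIndex hij, val_jumpIndex hij]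
  simp only [le_def, lt_def] at hab ⊢
  split_ifs <;> omega

end Fin

theorem sortv_update_eq_comp_jumpIndex {n : ℕ} {ζ : Fin n → ℝ} (hζ : Monotone ζ) {i j : Fin n}
    (hij : i ≤ j) : sortv (update ζ i (ζ j)) = ζ ∘ Fin.jumpIndex i j := by
  have : NeZero n := NeZero.of_pos i.pos
  have hcomp := update_comp_perm_eq_comp_update ζ (Fin.cycleIcc i j) (Fin.cycleIcc_of_last hij)
  have hsorted :=
    Tuple.comp_sort_eq_comp_iff_monotone.2 (hcomp ▸ hζ.comp (Fin.monotone_jumpIndex hij))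
  rw [sortv, ← hsorted, hcomp, Fin.jumpIndex]

/-- The rank-based jump preserves domination of spacings: if two ordered configurations
have componentwise dominated spacings, then after replacing the rank-`i` value by the
rank-`j` value (`i < j`) in both and re-sorting, the spacings are still dominated. -/
theorem stmt13 (M : ℕ) (ζ ζ' : Fin (M + 1) → ℝ)
    (hζ : Monotone ζ) (hζ' : Monotone ζ')
    (hdom : ∀ k : Fin M, ζ k.succ - ζ k.castSucc ≤ ζ' k.succ - ζ' k.castSucc)
    (i j : Fin (M + 1)) (hij : i < j) :
    ∀ k : Fin M,
      sortv (Function.update ζ i (ζ j)) k.succ -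
        sortv (Function.update ζ i (ζ j)) k.castSucc ≤
      sortv (Function.update ζ' i (ζ' j)) k.succ -
        sortv (Function.update ζ' i (ζ' j)) k.castSucc := by
  rw [sortv_update_eq_comp_jumpIndex hζ hij.le, sortv_update_eq_comp_jumpIndex hζ' hij.le,
    Fin.spacing_le_iff_monotone_sub]
  exact ((Fin.spacing_le_iff_monotone_sub ζ ζ').1 hdom).comp (Fin.monotone_jumpIndex hij.le)
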